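/- The infimum of ‖G - I_n‖_F² over all real n×n matrices G with det(G) ≤ 0 equals 1, where ‖·‖_F is the Frobenius norm. In particular, for any G with det(G) ≤ 0 we have ‖G - I_n‖_F ≥ 1, and the bound is attained by the diagonal matrix diag(0, 1, ..., 1). -/

import Mathlib

open Matrix Finset

lemma frob_trace {n : ℕ} (E : Matrix (Fin n) (Fin n) ℝ) :
    (E.transpose * E).trace = ∑ i, ∑ j, (E j i) ^ 2 := by
  simp [Matrix.trace, Matrix.mul_apply, Matrix.diag, sq]

lemma mulVec_sq_le {n : ℕ} (E : Matrix (Fin n) (Fin n) ℝ) (x : Fin n → ℝ) :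
    ∑ i, (E.mulVec x i) ^ 2 ≤ (∑ i, ∑ j, (E i j) ^ 2) * ∑ j, (x j) ^ 2 := by
  rw [Finset.sum_mul]
  apply Finset.sum_le_sum
  intro i _
  simpa [Matrix.mulVec, dotProduct] using
    Finset.sum_mul_sq_le_sq_mul_sq Finset.univ (fun j => E i j) x

lemma det_pos_of_small {n : ℕ} (G : Matrix (Fin n) (Fin n) ℝ)
    (h : ((G - 1).transpose * (G - 1)).trace < 1) : 0 < G.det := by
  set E := G - 1 with hE
  set c : ℝ := ∑ i, ∑ j, (E j i) ^ 2 with hc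
  have hc1 : c < 1 := by rw [hc, ← frob_trace]; exact h
  have hc0 : 0 ≤ c := Finset.sum_nonneg fun i _ => Finset.sum_nonneg fun j _ => sq_nonneg _
  have hc' : (∑ i, ∑ j, (E i j) ^ 2) = c := Finset.sum_comm
  have hne : ∀ t : ℝ, t ∈ Set.Icc (0:ℝ) 1 → (1 + t • E).det ≠ 0 := by
    intro t ht hdet
    obtain ⟨x, hx0, hx⟩ := (Matrix.exists_mulVec_eq_zero_iff).2 hdet
    rw [Matrix.add_mulVec, Matrix.one_mulVec, Matrix.smul_mulVec] at hx
    have hx' : ∀ i, x i = -(t * E.mulVec x i) := by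
      intro i
      have := congrFun hx i
      simp [Pi.smul_apply] at this
      linarith
    have hsum : ∑ i, x i ^ 2 = t ^ 2 * ∑ i, (E.mulVec x i) ^ 2 := by
      rw [Finset.mul_sum]
      refine Finset.sum_congr rfl fun i _ => ?_
      rw [hx' i]; ring
    have hxpos : 0 < ∑ i, x i ^ 2 := by
      obtain ⟨i, hi⟩ := Function.ne_iff.1 hx0
      exact Finset.sum_pos' (fun j _ => sq_nonneg _)
        ⟨i, Finset.mem_univ i, pow_two_pos_of_ne_zero hi⟩
    have hb := mulVec_sq_le E x
    rw [hc'] at hb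
    have h1 := mul_le_mul_of_nonneg_left hb (sq_nonneg t)
    rw [← hsum] at h1
    have ht2 : t ^ 2 ≤ 1 := by nlinarith [ht.1, ht.2]
    nlinarith [mul_nonneg hc0 hxpos.le]
  -- continuity + IVT
  by_contra hle
  push_neg at hle
  have hcont : ContinuousOn (fun t : ℝ => (1 + t • E).det) (Set.Icc 0 1) := by
    apply Continuous.continuousOn
    exact Continuous.matrix_det (by continuity)
  have h0 : (fun t : ℝ => (1 + t • E).det) 0 = 1 := by simp
  have h1 : (fun t : ℝ => (1 + t • E).det) 1 = G.det := by simp [hE]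
  have := intermediate_value_Icc' (by norm_num : (0:ℝ) ≤ 1) hcont
  have hmem : (0:ℝ) ∈ Set.Icc ((fun t : ℝ => (1 + t • E).det) 1)
      ((fun t : ℝ => (1 + t • E).det) 0) := by
    rw [h0, h1]; exact ⟨hle, by norm_num⟩
  obtain ⟨t, htI, ht0⟩ := this hmem
  exact hne t htI ht0

/-- The infimum of `‖G - I‖_F²` over matrices `G` with `det G ≤ 0` equals `1`:
every such `G` satisfies `tr((G-I)ᵀ(G-I)) ≥ 1`, and the bound is attained by
`diag(0, 1, ..., 1)`. -/
theorem stmt_10 {n : ℕ} (hn : 0 < n) :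
    (∀ G : Matrix (Fin n) (Fin n) ℝ, G.det ≤ 0 →
      1 ≤ ((G - 1).transpose * (G - 1)).trace) ∧
    ((1 - Matrix.single (⟨0, hn⟩ : Fin n) (⟨0, hn⟩ : Fin n) (1 : ℝ)).det ≤ 0 ∧
      (((1 - Matrix.single (⟨0, hn⟩ : Fin n) (⟨0, hn⟩ : Fin n) (1 : ℝ)) - 1).transpose *
        ((1 - Matrix.single (⟨0, hn⟩ : Fin n) (⟨0, hn⟩ : Fin n) (1 : ℝ)) - 1)).trace = 1) := by
  refine ⟨fun G hG => ?_, ?_, ?_⟩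
  · by_contra hlt
    push_neg at hlt
    exact absurd hG (not_le.2 (det_pos_of_small G hlt))
  · set i0 : Fin n := ⟨0, hn⟩
    have : (1 - Matrix.single i0 i0 (1 : ℝ)).det = 0 := by
      rw [← Matrix.exists_mulVec_eq_zero_iff]
      refine ⟨Pi.single i0 1, fun h => by simpa using congrFun h i0, ?_⟩
      ext i
      simp [Matrix.sub_mulVec, Matrix.one_mulVec, Matrix.mulVec, dotProduct,
        Matrix.single, Matrix.one_apply, Pi.single_apply, Finset.sum_ite_eq', eq_comm]
    simp [this]
  · have h : ((1 - Matrix.single (⟨0, hn⟩ : Fin n) (⟨0, hn⟩ : Fin n) (1 : ℝ)) - 1)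
        = -(Matrix.single (⟨0, hn⟩ : Fin n) (⟨0, hn⟩ : Fin n) (1 : ℝ)) := by abel
    rw [h, Matrix.transpose_neg, Matrix.neg_mul, Matrix.mul_neg, neg_neg]
    rw [frob_trace]
    simp [Matrix.single, ite_and, ite_pow, Finset.sum_ite_eq]
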